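/- arXiv:2604.16842 — 6 statements merged into one kernel-verified Lean document; each statement's English description precedes it below -/
import Mathlib

section
/- Let ρ(x) = 1/(2π(1−cos x)). For every smooth 2π-periodic function f : ℝ → ℝ with f(0) = 0, the following identity holds: ∫_{−π}^{π} sin x · f'(x) · f(x) · ρ(x) dx = (1/2) ∫_{−π}^{π} f(x)² ρ(x) dx (both integrals being finite). -/
/-!
Away from `0` one has `(sin · ρ)' = -ρ`, so `F = f² · sin · ρ` has derivative
`2 sin · f' · f · ρ - f² · ρ`. Since `f(x) = O(x)` and `ρ(x) = O(x⁻²)` on `[-π, π]`, both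
integrands are bounded and `F` extends continuously by `0` at the origin; it also vanishes at
`±π`, so the fundamental theorem of calculus with the single exceptional point `0` gives the
identity.
-/

open Real MeasureTheory

noncomputable def rho (x : ℝ) : ℝ := 1 / (2 * π * (1 - Real.cos x))

open Set Filter Topology

lemma rho_nonneg (x : ℝ) : 0 ≤ rho x := by
  unfold rho
  have := cos_le_one x
  positivity

lemma measurable_rho : Measurable rho := by
  unfold rho; fun_prop

lemma sq_mul_rho_le {x : ℝ} (hx : |x| ≤ π) : x ^ 2 * rho x ≤ π / 4 := by
  rcases eq_or_ne x 0 with rfl | hx0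
  · simpa using div_nonneg pi_nonneg zero_le_four
  have hcos : 2 / π ^ 2 * x ^ 2 ≤ 1 - cos x := by linarith [cos_le_one_sub_mul_cos_sq hx]
  have hpos : 0 < 2 / π ^ 2 * x ^ 2 := by positivity
  rw [rho, mul_one_div, div_le_div_iff₀ (by nlinarith [pi_pos]) (by norm_num)]
  calc x ^ 2 * 4 = π ^ 2 * (2 / π ^ 2 * x ^ 2) * 2 := by field_simp; ring
    _ ≤ π ^ 2 * (1 - cos x) * 2 := by gcongr
    _ = π * (2 * π * (1 - cos x)) := by ring

lemma abs_mul_rho_le {a x C : ℝ} (hC : 0 ≤ C) (hx : |x| ≤ π) (ha : |a| ≤ C * x ^ 2) :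
    |a * rho x| ≤ C * (π / 4) :=
  calc |a * rho x| = |a| * rho x := by rw [abs_mul, abs_of_nonneg (rho_nonneg x)]
    _ ≤ C * x ^ 2 * rho x := by gcongr; exact rho_nonneg x
    _ ≤ C * (π / 4) := by rw [mul_assoc]; gcongr; exact sq_mul_rho_le hx

lemma hasDerivAt_sin_mul_rho {x : ℝ} (hx : cos x ≠ 1) :
    HasDerivAt (fun y => sin y * rho y) (-rho x) x := by
  have hd : 2 * π * (1 - cos x) ≠ 0 := by
    have : 1 - cos x ≠ 0 := sub_ne_zero.2 hx.symm
    positivity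
  have hden : HasDerivAt (fun y => 2 * π * (1 - cos y)) (2 * π * sin x) x := by
    simpa using ((hasDerivAt_cos x).const_sub 1).const_mul (2 * π)
  have hρ : HasDerivAt rho ((0 * (2 * π * (1 - cos x)) - 1 * (2 * π * sin x))
      / (2 * π * (1 - cos x)) ^ 2) x :=
    (hasDerivAt_const x (1 : ℝ)).div hden hd
  refine ((hasDerivAt_sin x).fun_mul hρ).congr_deriv ?_
  simp only [rho]
  field_simp
  linear_combination -sin_sq_add_cos_sq x

lemma cos_ne_one_of_mem_Icc {x : ℝ} (hx : x ∈ Icc (-π) π) (hx0 : x ≠ 0) : cos x ≠ 1 :=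
  fun h => hx0 <| (cos_eq_one_iff_of_lt_of_lt (by linarith [hx.1, pi_pos])
    (by linarith [hx.2, pi_pos])).1 h

lemma abs_le_mul_abs_of_norm_deriv_le {f : ℝ → ℝ} {s : Set ℝ} {L : ℝ} (hs : Convex ℝ s)
    (h0s : 0 ∈ s) (hf : Differentiable ℝ f) (hf0 : f 0 = 0) (hL : ∀ x ∈ s, ‖deriv f x‖ ≤ L) :
    ∀ x ∈ s, |f x| ≤ L * |x| := fun x hx => by
  simpa [hf0] using hs.norm_image_sub_le_of_norm_deriv_le (fun y _ => hf y) hL h0s hx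

lemma abs_sq_le_of_abs_le_mul_abs {a x L : ℝ} (h : |a| ≤ L * |x|) : |a ^ 2| ≤ L ^ 2 * x ^ 2 := by
  rw [abs_pow, ← sq_abs x, ← mul_pow]
  exact pow_le_pow_left₀ (abs_nonneg a) h 2

lemma abs_sin_mul_mul_le {a b x L : ℝ} (ha : |a| ≤ L) (hb : |b| ≤ L * |x|) :
    |sin x * a * b| ≤ L ^ 2 * x ^ 2 :=
  calc |sin x * a * b| = |sin x| * |a| * |b| := by rw [abs_mul, abs_mul]
    _ ≤ |x| * L * (L * |x|) := by
      have hL : 0 ≤ L := (abs_nonneg a).trans ha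
      have hsin : |sin x| ≤ |x| := abs_sin_le_abs
      gcongr
    _ = L ^ 2 * x ^ 2 := by rw [← sq_abs x]; ring

section

variable {g : ℝ → ℝ} {C : ℝ}

lemma intervalIntegrable_mul_rho (hg : Measurable g) (hC : 0 ≤ C)
    (hgC : ∀ x ∈ Icc (-π) π, |g x| ≤ C * x ^ 2) :
    IntervalIntegrable (fun x => g x * rho x) volume (-π) π := by
  refine IntervalIntegrable.mono_fun' (g := fun _ => C * (π / 4)) intervalIntegrable_const
    (hg.mul measurable_rho).aestronglyMeasurable ?_
  filter_upwards [ae_restrict_mem measurableSet_uIoc] with x hx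
  have hx : x ∈ Icc (-π) π := by
    simpa [uIcc_of_le (by linarith [pi_pos] : -π ≤ π)] using uIoc_subset_uIcc hx
  exact abs_mul_rho_le hC (abs_le.2 hx) (hgC x hx)

lemma continuousOn_mul_sin_mul_rho (hg : Continuous g) (hC : 0 ≤ C)
    (hgC : ∀ x ∈ Icc (-π) π, |g x| ≤ C * x ^ 2) :
    ContinuousOn (fun x => g x * (sin x * rho x)) (Icc (-π) π) := by
  intro x hx
  rcases ne_or_eq x 0 with hx0 | rfl
  · exact (hg.continuousAt.mul
      (hasDerivAt_sin_mul_rho (cos_ne_one_of_mem_Icc hx hx0)).continuousAt).continuousWithinAt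
  have hbound : ∀ y ∈ Icc (-π) π, ‖g y * (sin y * rho y)‖ ≤ C * (π / 4) * |sin y| := by
    intro y hy
    rw [Real.norm_eq_abs, mul_left_comm, abs_mul, mul_comm]
    gcongr
    exact abs_mul_rho_le hC (abs_le.2 hy) (hgC y hy)
  have hlim : Tendsto (fun y => C * (π / 4) * |sin y|) (𝓝[Icc (-π) π] 0) (𝓝 0) := by
    have hcont : Continuous (fun y => C * (π / 4) * |sin y|) := by fun_prop
    simpa using (hcont.tendsto 0).mono_left nhdsWithin_le_nhds
  simpa [ContinuousWithinAt] using
    squeeze_zero_norm' (eventually_nhdsWithin_of_forall hbound) hlim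

lemma integral_deriv_mul_sin_mul_rho {g' : ℝ → ℝ} (hg : ∀ x, HasDerivAt g (g' x) x) (hC : 0 ≤ C)
    (hgC : ∀ x ∈ Icc (-π) π, |g x| ≤ C * x ^ 2)
    (h1 : IntervalIntegrable (fun x => g' x * (sin x * rho x)) volume (-π) π)
    (h2 : IntervalIntegrable (fun x => g x * rho x) volume (-π) π) :
    ∫ x in (-π)..π, g' x * (sin x * rho x) = ∫ x in (-π)..π, g x * rho x := by
  have hFTC := integral_eq_of_hasDerivAt_off_countable_of_le
    (fun x => g x * (sin x * rho x)) (fun x => g' x * (sin x * rho x) - g x * rho x)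
    (by linarith [pi_pos]) (countable_singleton 0)
    (continuousOn_mul_sin_mul_rho (continuous_iff_continuousAt.2 fun x => (hg x).continuousAt)
      hC hgC) ?_ (h1.sub h2)
  · simpa [intervalIntegral.integral_sub h1 h2, sub_eq_zero] using hFTC
  rintro x ⟨hx, hx0⟩
  refine ((hg x).mul (hasDerivAt_sin_mul_rho
    (cos_ne_one_of_mem_Icc (Ioo_subset_Icc_self hx) hx0))).congr_deriv ?_
  ring

end

theorem stmt5_general (f : ℝ → ℝ) (hf : ContDiff ℝ (⊤:ℕ∞) f)
    (h0 : f 0 = 0) :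
    IntervalIntegrable (fun x => Real.sin x * deriv f x * f x * rho x) volume (-π) π ∧
    IntervalIntegrable (fun x => (f x)^2 * rho x) volume (-π) π ∧
    (∫ x in (-π)..π, Real.sin x * deriv f x * f x * rho x)
      = (1/2) * ∫ x in (-π)..π, (f x)^2 * rho x := by
  have hfd : Differentiable ℝ f := hf.differentiable (by simp)
  obtain ⟨L, hL⟩ := isCompact_Icc.exists_bound_of_continuousOn
    (hf.continuous_deriv (by simp)).continuousOn (s := Icc (-π) π)
  have h0mem : (0 : ℝ) ∈ Icc (-π) π := ⟨by linarith [pi_pos], pi_pos.le⟩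
  have hfL := abs_le_mul_abs_of_norm_deriv_le (convex_Icc _ _) h0mem hfd h0 hL
  have hsq : ∀ x ∈ Icc (-π) π, |f x ^ 2| ≤ L ^ 2 * x ^ 2 := fun x hx =>
    abs_sq_le_of_abs_le_mul_abs (hfL x hx)
  have hprod : ∀ x ∈ Icc (-π) π, |sin x * deriv f x * f x| ≤ L ^ 2 * x ^ 2 := fun x hx =>
    abs_sin_mul_mul_le (hL x hx) (hfL x hx)
  have hfm : Measurable f := hfd.continuous.measurable
  have hf'm : Measurable (deriv f) := measurable_deriv f
  have h1 := intervalIntegrable_mul_rho (by fun_prop) (sq_nonneg L) hprod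
  have h2 := intervalIntegrable_mul_rho (by fun_prop) (sq_nonneg L) hsq
  refine ⟨h1, h2, ?_⟩
  have key := integral_deriv_mul_sin_mul_rho (g := fun x => f x ^ 2)
    (g' := fun x => 2 * f x * deriv f x) (fun x => by simpa using (hfd x).hasDerivAt.fun_pow 2)
    (sq_nonneg L) hsq ?_ h2
  · calc ∫ x in (-π)..π, sin x * deriv f x * f x * rho x
        = 1 / 2 * ∫ x in (-π)..π, 2 * f x * deriv f x * (sin x * rho x) := by
          rw [← intervalIntegral.integral_const_mul]
          congr 1 with x
          ring
      _ = 1 / 2 * ∫ x in (-π)..π, f x ^ 2 * rho x := by rw [key]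
  · convert h1.const_mul 2 using 1
    ext x
    ring

/-- For every smooth `2π`-periodic `f` with `f(0) = 0`, one has
`∫ sin x · f'(x) · f(x) · ρ(x) dx = (1/2) ∫ f(x)² ρ(x) dx` on `(−π, π)`,
both integrals being finite. -/
theorem stmt5 (f : ℝ → ℝ) (hf : ContDiff ℝ (⊤:ℕ∞) f)
    (hper : ∀ x, f (x + 2*π) = f x) (h0 : f 0 = 0) :
    IntervalIntegrable (fun x => Real.sin x * deriv f x * f x * rho x) volume (-π) π ∧
    IntervalIntegrable (fun x => (f x)^2 * rho x) volume (-π) π ∧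
    (∫ x in (-π)..π, Real.sin x * deriv f x * f x * rho x)
      = (1/2) * ∫ x in (-π)..π, (f x)^2 * rho x :=
  stmt5_general f hf h0
end

section
/- Let ρ(x) = 1/(2π(1−cos x)). The functions o^k(x) = sin(kx) − sin((k−1)x) for k = 1, 2, 3, … form an orthonormal family in the weighted space L²((−π,π), ρ dx): for all j, k ≥ 1, ∫_{−π}^{π} o^j(x) o^k(x) ρ(x) dx = δ_{jk}; moreover this family is total (its closed linear span equals the subspace of odd functions) in the odd part of L²((−π,π), ρ dx). Similarly, the functions e^k(x) = cos(kx) − cos((k+1)x) for k = 0, 1, 2, … satisfy ∫_{−π}^{π} e^j(x) e^k(x) ρ(x) dx = δ_{jk} for all j, k ≥ 0 and form a complete orthonormal basis of the even part of L²((−π,π), ρ dx). -/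
open Real MeasureTheory Set

/-- The odd basis functions `o^k(x) = sin(kx) − sin((k−1)x)`, `k ≥ 1`. -/
noncomputable def obasis (k : ℕ) (x : ℝ) : ℝ :=
  Real.sin ((k:ℝ) * x) - Real.sin (((k:ℝ) - 1) * x)

/-- The even basis functions `e^k(x) = cos(kx) − cos((k+1)x)`, `k ≥ 0`. -/
noncomputable def ebasis (k : ℕ) (x : ℝ) : ℝ :=
  Real.cos ((k:ℝ) * x) - Real.cos (((k:ℝ) + 1) * x)

/-!
Since `1 - cos x = 2 sin²(x/2)`, the weight is `ρ(x) = 1/(4π sin²(x/2))`, and the sum-to-product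
formulas give `o^(m+1)(x) = 2 sin(x/2) cos((m+1/2)x)` and `e^m(x) = 2 sin(x/2) sin((m+1/2)x)`.
So `f ↦ f / (2 sin(x/2))` maps `L²(ρ dx)` isometrically (up to the factor `π`) onto `L²(-π, π)`
and carries `o^(m+1)`, `e^m` to the half-integer harmonics `cos((m+1/2)x)`, `sin((m+1/2)x)`.
Their orthogonality is elementary. For completeness, the pairings of `g = f / (2 sin(x/2))`
with these harmonics are the Fourier coefficients of `g(x) e^(-ix/2)`, so Parseval's identity
forces `g = 0`.
Parity settles the other family in each case: an odd `f` is orthogonal to every `e^k` and an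
even `f` to every `o^k`.
-/

theorem integral_eq_zero_of_odd {u : ℝ → ℝ} (a : ℝ) (hu : ∀ x, u (-x) = -u x) :
    ∫ x in -a..a, u x = 0 := by
  have h := intervalIntegral.integral_comp_neg (a := -a) (b := a) u
  simp only [hu, intervalIntegral.integral_neg, neg_neg] at h
  linarith

theorem IntervalIntegrable.ofReal {f : ℝ → ℝ} {a b : ℝ} (hf : IntervalIntegrable f volume a b) :
    IntervalIntegrable (fun x => (f x : ℂ)) volume a b :=
  ⟨hf.1.ofReal, hf.2.ofReal⟩

theorem integral_ofReal_mul_exp_neg_mul_I {g : ℝ → ℝ} {a b : ℝ}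
    (hg : IntervalIntegrable g volume a b) (c : ℝ) :
    ∫ x in a..b, (g x : ℂ) * Complex.exp (-(c * x) * Complex.I) =
      (∫ x in a..b, g x * cos (c * x)) - (∫ x in a..b, g x * sin (c * x)) * Complex.I := by
  have hcos := (hg.mul_continuousOn (g := fun x => cos (c * x)) (by fun_prop)).ofReal
  have hsin := (hg.mul_continuousOn (g := fun x => sin (c * x)) (by fun_prop)).ofReal
  rw [← intervalIntegral.integral_ofReal, ← intervalIntegral.integral_ofReal,
    ← intervalIntegral.integral_mul_const, ← intervalIntegral.integral_sub hcos (hsin.mul_const _)]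
  congr 1 with x
  rw [← Complex.ofReal_mul, ← Complex.ofReal_neg, Complex.exp_mul_I, ← Complex.ofReal_cos,
    ← Complex.ofReal_sin, cos_neg, sin_neg]
  push_cast
  ring

theorem ae_eq_zero_of_fourierCoeffOn_eq_zero {a b : ℝ} (hab : a < b) {F : ℝ → ℂ}
    (hF : MemLp F 2 (volume.restrict (Ioc a b))) (h : ∀ n, fourierCoeffOn hab F n = 0) :
    F =ᵐ[volume.restrict (Ioc a b)] 0 := by
  have hparseval := tsum_sq_fourierCoeffOn hab hF
  simp only [h, norm_zero, ne_eq, OfNat.ofNat_ne_zero, not_false_eq_true, zero_pow, tsum_zero,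
    intervalIntegral.integral_of_le hab.le, smul_eq_mul, zero_eq_mul, inv_eq_zero,
    sub_eq_zero, hab.ne', false_or] at hparseval
  have hnorm := (integral_eq_zero_iff_of_nonneg (fun x => by positivity)
    (hF.integrable_norm_pow two_ne_zero)).1 hparseval
  filter_upwards [hnorm] with x hx
  simpa using hx

theorem integral_cos_int_mul (n : ℤ) :
    ∫ x in -π..π, cos (n * x) = if n = 0 then 2 * π else 0 := by
  split_ifs with hn
  · simp [hn]
    ring
  · have hn' : (n : ℝ) ≠ 0 := by exact_mod_cast hn
    simp [intervalIntegral.integral_comp_mul_left _ hn', sin_int_mul_pi]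

theorem integral_cos_half_mul_cos_half (m n : ℕ) :
    ∫ x in -π..π, cos ((m + 1 / 2) * x) * cos ((n + 1 / 2) * x) = if m = n then π else 0 := by
  have hprod (x : ℝ) : cos ((m + 1 / 2) * x) * cos ((n + 1 / 2) * x) =
      (cos (((m - n : ℤ) : ℝ) * x) + cos (((m + n + 1 : ℤ) : ℝ) * x)) / 2 := by
    push_cast
    rw [show ((m : ℝ) - n) * x = (m + 1 / 2) * x - (n + 1 / 2) * x by ring,
      show ((m : ℝ) + n + 1) * x = (m + 1 / 2) * x + (n + 1 / 2) * x by ring, cos_sub, cos_add]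
    ring
  simp_rw [hprod]
  rw [intervalIntegral.integral_div, intervalIntegral.integral_add
    (Continuous.intervalIntegrable (by fun_prop) _ _)
    (Continuous.intervalIntegrable (by fun_prop) _ _),
    integral_cos_int_mul, integral_cos_int_mul, if_neg (show (m + n + 1 : ℤ) ≠ 0 by omega)]
  by_cases h : m = n <;> simp [h, sub_eq_zero]

theorem integral_sin_half_mul_sin_half (m n : ℕ) :
    ∫ x in -π..π, sin ((m + 1 / 2) * x) * sin ((n + 1 / 2) * x) = if m = n then π else 0 := by
  have hprod (x : ℝ) : sin ((m + 1 / 2) * x) * sin ((n + 1 / 2) * x) =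
      (cos (((m - n : ℤ) : ℝ) * x) - cos (((m + n + 1 : ℤ) : ℝ) * x)) / 2 := by
    push_cast
    rw [show ((m : ℝ) - n) * x = (m + 1 / 2) * x - (n + 1 / 2) * x by ring,
      show ((m : ℝ) + n + 1) * x = (m + 1 / 2) * x + (n + 1 / 2) * x by ring, cos_sub, cos_add]
    ring
  simp_rw [hprod]
  rw [intervalIntegral.integral_div, intervalIntegral.integral_sub
    (Continuous.intervalIntegrable (by fun_prop) _ _)
    (Continuous.intervalIntegrable (by fun_prop) _ _),
    integral_cos_int_mul, integral_cos_int_mul, if_neg (show (m + n + 1 : ℤ) ≠ 0 by omega)]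
  by_cases h : m = n <;> simp [h, sub_eq_zero]

theorem ae_eq_zero_of_integral_mul_cos_sin_half_eq_zero {g : ℝ → ℝ}
    (hg : MemLp g 2 (volume.restrict (Ioc (-π) π)))
    (hcos : ∀ m : ℕ, ∫ x in -π..π, g x * cos ((m + 1 / 2) * x) = 0)
    (hsin : ∀ m : ℕ, ∫ x in -π..π, g x * sin ((m + 1 / 2) * x) = 0) :
    g =ᵐ[volume.restrict (Ioc (-π) π)] 0 := by
  have hππ : -π < π := by linarith [pi_pos]
  have hgi : IntervalIntegrable g volume (-π) π := by
    rw [intervalIntegrable_iff_integrableOn_Ioc_of_le hππ.le]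
    exact hg.integrable one_le_two
  have hcs (n : ℤ) : ∫ x in -π..π, g x * cos ((n + 1 / 2) * x) = 0 ∧
      ∫ x in -π..π, g x * sin ((n + 1 / 2) * x) = 0 := by
    cases n with
    | ofNat m => exact_mod_cast (⟨hcos m, hsin m⟩ : _ ∧ _)
    | negSucc m =>
      have hneg : ((Int.negSucc m : ℤ) + 1 / 2 : ℝ) = -(m + 1 / 2) := by
        rw [Int.cast_negSucc]; push_cast; ring
      simp only [hneg, neg_mul, cos_neg, sin_neg, mul_neg, intervalIntegral.integral_neg,
        neg_eq_zero]
      exact ⟨hcos m, hsin m⟩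
  let F : ℝ → ℂ := fun x => g x * Complex.exp (-(x / 2) * Complex.I)
  have hF : MemLp F 2 (volume.restrict (Ioc (-π) π)) := by
    refine hg.congr_norm ?_ (ae_of_all _ fun x => ?_)
    · exact (Complex.continuous_ofReal.comp_aestronglyMeasurable hg.1).mul
        (Continuous.aestronglyMeasurable (by fun_prop))
    · simp [F, Complex.norm_exp]
  have hF0 : F =ᵐ[volume.restrict (Ioc (-π) π)] 0 := by
    refine ae_eq_zero_of_fourierCoeffOn_eq_zero hππ hF fun n => ?_
    rw [fourierCoeffOn_eq_integral]
    have hexp (x : ℝ) : fourier (-n) (x : AddCircle (π - -π)) • F x =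
        g x * Complex.exp (-(((n + 1 / 2 : ℝ)) * x) * Complex.I) := by
      rw [fourier_coe_apply, smul_eq_mul, mul_left_comm, ← Complex.exp_add]
      congr 2
      push_cast
      field_simp
      ring
    simp_rw [hexp, integral_ofReal_mul_exp_neg_mul_I hgi, (hcs n).1, (hcs n).2]
    simp
  filter_upwards [hF0] with x hx
  simpa [F, Complex.exp_ne_zero] using hx

theorem rho_eq_inv_sin_half_sq (x : ℝ) : rho x = (4 * π * sin (x / 2) ^ 2)⁻¹ := by
  conv_lhs => rw [rho, ← mul_div_cancel₀ x (two_ne_zero' ℝ), cos_two_mul_eq_one_sub]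
  ring

theorem rho_neg (x : ℝ) : rho (-x) = rho x := by
  rw [rho, rho, cos_neg]

theorem obasis_neg (k : ℕ) (x : ℝ) : obasis k (-x) = -obasis k x := by
  simp only [obasis, mul_neg, sin_neg]
  ring

theorem ebasis_neg (k : ℕ) (x : ℝ) : ebasis k (-x) = ebasis k x := by
  simp only [ebasis, mul_neg, cos_neg]

theorem obasis_succ_eq_two_sin_half_mul_cos (m : ℕ) (x : ℝ) :
    obasis (m + 1) x = 2 * sin (x / 2) * cos ((m + 1 / 2) * x) := by
  rw [obasis, sin_sub_sin]
  push_cast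
  ring_nf

theorem ebasis_eq_two_sin_half_mul_sin (k : ℕ) (x : ℝ) :
    ebasis k x = 2 * sin (x / 2) * sin ((k + 1 / 2) * x) := by
  rw [ebasis, cos_sub_cos, show (k * x - (k + 1) * x) / 2 = -(x / 2) by ring, sin_neg]
  ring_nf

theorem sin_half_ne_zero {x : ℝ} (hx : x ∈ Ioc (-π) π) (hx0 : x ≠ 0) : sin (x / 2) ≠ 0 := by
  rw [Ne, sin_eq_zero_iff_of_lt_of_lt (by linarith [hx.1, pi_pos]) (by linarith [hx.2, pi_pos])]
  exact div_ne_zero hx0 two_ne_zero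

theorem integral_two_sin_half_mul_mul_rho (φ ψ : ℝ → ℝ) :
    ∫ x in -π..π, 2 * sin (x / 2) * φ x * (2 * sin (x / 2) * ψ x) * rho x =
      (∫ x in -π..π, φ x * ψ x) / π := by
  rw [← intervalIntegral.integral_div]
  refine intervalIntegral.integral_congr_ae ?_
  filter_upwards [compl_mem_ae_iff.2 (measure_singleton (0 : ℝ))] with x hx0 hx
  rw [uIoc_of_le (by linarith [pi_pos])] at hx
  have := sin_half_ne_zero hx hx0
  rw [rho_eq_inv_sin_half_sq]
  field_simp
  ring

theorem integral_mul_two_sin_half_mul_rho (f φ : ℝ → ℝ) :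
    ∫ x in -π..π, f x * (2 * sin (x / 2) * φ x) * rho x =
      (∫ x in -π..π, f x / (2 * sin (x / 2)) * φ x) / π := by
  rw [← intervalIntegral.integral_div]
  congr 1 with x
  rcases eq_or_ne (sin (x / 2)) 0 with h | h
  · simp [h]
  · rw [rho_eq_inv_sin_half_sq]
    field_simp
    ring

theorem div_two_sin_half_sq (y x : ℝ) : (y / (2 * sin (x / 2))) ^ 2 = π * (y ^ 2 * rho x) := by
  rw [rho_eq_inv_sin_half_sq]
  field_simp
  ring

theorem integral_obasis_mul_obasis_mul_rho {j k : ℕ} (hj : 1 ≤ j) (hk : 1 ≤ k) :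
    ∫ x in -π..π, obasis j x * obasis k x * rho x = if j = k then 1 else 0 := by
  obtain ⟨m, rfl⟩ := Nat.exists_eq_add_of_le' hj
  obtain ⟨n, rfl⟩ := Nat.exists_eq_add_of_le' hk
  simp only [obasis_succ_eq_two_sin_half_mul_cos, integral_two_sin_half_mul_mul_rho,
    integral_cos_half_mul_cos_half, Nat.add_right_cancel_iff]
  split_ifs <;> simp [pi_ne_zero]

theorem integral_ebasis_mul_ebasis_mul_rho (j k : ℕ) :
    ∫ x in -π..π, ebasis j x * ebasis k x * rho x = if j = k then 1 else 0 := by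
  simp only [ebasis_eq_two_sin_half_mul_sin, integral_two_sin_half_mul_mul_rho,
    integral_sin_half_mul_sin_half]
  split_ifs <;> simp [pi_ne_zero]

theorem ae_eq_zero_of_integral_obasis_ebasis_mul_rho_eq_zero {f : ℝ → ℝ} (hf : Measurable f)
    (hf2 : IntegrableOn (fun x => f x ^ 2 * rho x) (Ioo (-π) π))
    (ho : ∀ k : ℕ, 1 ≤ k → ∫ x in -π..π, f x * obasis k x * rho x = 0)
    (he : ∀ k : ℕ, ∫ x in -π..π, f x * ebasis k x * rho x = 0) :
    ∀ᵐ x ∂volume.restrict (Ioo (-π) π), f x = 0 := by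
  let g := fun x => f x / (2 * sin (x / 2))
  have hIoo : volume.restrict (Ioo (-π) π) = volume.restrict (Ioc (-π) π) :=
    Measure.restrict_congr_set Ioo_ae_eq_Ioc
  have hg : MemLp g 2 (volume.restrict (Ioc (-π) π)) := by
    have hgm : Measurable g := hf.div (by fun_prop)
    rw [← hIoo, memLp_two_iff_integrable_sq hgm.aestronglyMeasurable]
    simpa only [g, div_two_sin_half_sq] using hf2.const_mul π
  have hg0 : g =ᵐ[volume.restrict (Ioc (-π) π)] 0 := by
    refine ae_eq_zero_of_integral_mul_cos_sin_half_eq_zero hg (fun m => ?_) (fun m => ?_)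
    · have h := ho (m + 1) (by omega)
      rw [funext (obasis_succ_eq_two_sin_half_mul_cos m), integral_mul_two_sin_half_mul_rho] at h
      exact (div_eq_zero_iff.1 h).resolve_right pi_ne_zero
    · have h := he m
      rw [funext (ebasis_eq_two_sin_half_mul_sin m), integral_mul_two_sin_half_mul_rho] at h
      exact (div_eq_zero_iff.1 h).resolve_right pi_ne_zero
  rw [hIoo]
  filter_upwards [hg0, ae_restrict_mem measurableSet_Ioc,
    ae_restrict_of_ae (compl_mem_ae_iff.2 (measure_singleton (0 : ℝ)))] with x hgx hx hx0
  simpa [g, sin_half_ne_zero hx hx0] using hgx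

/-- The families `o^k` (k ≥ 1) and `e^k` (k ≥ 0) are orthonormal in `L²((−π,π), ρ dx)`
and total in, respectively, the odd and even parts of that space: any odd
(resp. even) function that is square-integrable against `ρ` and orthogonal to all
`o^k` (resp. `e^k`) vanishes almost everywhere on `(−π, π)`. -/
theorem stmt6 :
    (∀ j k : ℕ, 1 ≤ j → 1 ≤ k →
      (∫ x in (-π)..π, obasis j x * obasis k x * rho x) = if j = k then 1 else 0) ∧
    (∀ f : ℝ → ℝ, Measurable f → (∀ x, f (-x) = -(f x)) →
      IntegrableOn (fun x => (f x)^2 * rho x) (Ioo (-π) π) →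
      (∀ k : ℕ, 1 ≤ k → (∫ x in (-π)..π, f x * obasis k x * rho x) = 0) →
      ∀ᵐ x ∂(volume.restrict (Ioo (-π) π)), f x = 0) ∧
    (∀ j k : ℕ,
      (∫ x in (-π)..π, ebasis j x * ebasis k x * rho x) = if j = k then 1 else 0) ∧
    (∀ f : ℝ → ℝ, Measurable f → (∀ x, f (-x) = f x) →
      IntegrableOn (fun x => (f x)^2 * rho x) (Ioo (-π) π) →
      (∀ k : ℕ, (∫ x in (-π)..π, f x * ebasis k x * rho x) = 0) →
      ∀ᵐ x ∂(volume.restrict (Ioo (-π) π)), f x = 0) := by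
  refine ⟨fun j k => integral_obasis_mul_obasis_mul_rho, fun f hf hodd hf2 ho => ?_,
    integral_ebasis_mul_ebasis_mul_rho, fun f hf heven hf2 he => ?_⟩
  · refine ae_eq_zero_of_integral_obasis_ebasis_mul_rho_eq_zero hf hf2 ho fun k => ?_
    exact integral_eq_zero_of_odd π fun x => by rw [hodd, ebasis_neg, rho_neg]; ring
  · refine ae_eq_zero_of_integral_obasis_ebasis_mul_rho_eq_zero hf hf2 (fun k _ => ?_) he
    exact integral_eq_zero_of_odd π fun x => by rw [heven, obasis_neg, rho_neg]; ring
end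

section
/- Suppose ω, ψ : ℝ → ℝ are odd, 2π-periodic functions, ψ is C², and −ψ'' = ω. Then the derivative of ψ at the origin is given by ψ'(0) = −(1/2π) ∫_0^{2π} y ω(y) dy, and for every x one has the representation ψ(x) = ∫_0^{x} (y − x) ω(y) dy + x ψ'(0). -/
open Real MeasureTheory

/-! Since `(y - c) ψ'(y) - ψ(y)` is a primitive of `(y - c) ψ''(y) = -(y - c) ω(y)`, integrating
over `[0, x]` with `c = x` gives the representation (`ψ(0) = 0` by oddness), and integrating over
`[0, 2π]` with `c = 0` gives `ψ'(0)`, because `ψ` and `ψ'` agree at `0` and `2π` by periodicity. -/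

theorem Function.Periodic.deriv {f : ℝ → ℝ} {c : ℝ} (hf : Function.Periodic f c) :
    Function.Periodic (deriv f) c := fun x => by
  rw [← deriv_comp_add_const, hf.funext]

theorem integral_sub_mul_deriv_deriv {f : ℝ → ℝ} (hf : ContDiff ℝ 2 f) (a b c : ℝ) :
    ∫ y in a..b, (y - c) * deriv (deriv f) y
      = ((b - c) * deriv f b - f b) - ((a - c) * deriv f a - f a) := by
  have hf' : ContDiff ℝ 1 (deriv f) := hf.iterate_deriv' 1 1
  have hprim (y : ℝ) : HasDerivAt (fun y => (y - c) * deriv f y - f y)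
      ((y - c) * deriv (deriv f) y) y := by
    refine ((((hasDerivAt_id' y).sub_const c).fun_mul
      (hf'.differentiable one_ne_zero y).hasDerivAt).fun_sub
      (hf.differentiable two_ne_zero y).hasDerivAt).congr_deriv ?_
    ring
  refine intervalIntegral.integral_eq_sub_of_hasDerivAt (fun y _ => hprim y) ?_
  exact ((continuous_id.sub continuous_const).mul
    (hf'.continuous_deriv le_rfl)).intervalIntegrable a b

theorem stmt9_general (ω ψ : ℝ → ℝ)
    (hψodd : ∀ x, ψ (-x) = -(ψ x))
    (hψper : ∀ x, ψ (x + 2*π) = ψ x)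
    (hψ : ContDiff ℝ 2 ψ)
    (hBS : ∀ x, -(deriv (deriv ψ) x) = ω x) :
    deriv ψ 0 = -(1/(2*π)) * (∫ y in (0:ℝ)..(2*π), y * ω y) ∧
    ∀ x : ℝ, ψ x = (∫ y in (0:ℝ)..x, (y - x) * ω y) + x * deriv ψ 0 := by
  obtain rfl : ω = fun y => -deriv (deriv ψ) y := funext fun y => (hBS y).symm
  have hψ0 : ψ 0 = 0 := by linarith [neg_zero (G := ℝ) ▸ hψodd 0]
  have hψ2π : ψ (2 * π) = ψ 0 := by simpa using hψper 0
  have hψ'2π : deriv ψ (2 * π) = deriv ψ 0 := by simpa using Function.Periodic.deriv hψper 0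
  have hmoment := integral_sub_mul_deriv_deriv hψ 0 (2 * π) 0
  simp only [sub_zero, hψ2π, hψ'2π] at hmoment
  simp only [mul_neg, intervalIntegral.integral_neg, integral_sub_mul_deriv_deriv hψ, hmoment]
  constructor
  · field_simp
    ring
  · intro x
    rw [hψ0]
    ring

/-- One-dimensional Biot–Savart law: if `ω, ψ` are odd `2π`-periodic, `ψ` is `C²` and
`−ψ'' = ω`, then `ψ'(0) = −(1/2π) ∫₀^{2π} y ω(y) dy` and
`ψ(x) = ∫₀ˣ (y − x) ω(y) dy + x ψ'(0)` for every `x`. -/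
theorem stmt9 (ω ψ : ℝ → ℝ)
    (hωodd : ∀ x, ω (-x) = -(ω x)) (hψodd : ∀ x, ψ (-x) = -(ψ x))
    (hωper : ∀ x, ω (x + 2*π) = ω x) (hψper : ∀ x, ψ (x + 2*π) = ψ x)
    (hψ : ContDiff ℝ 2 ψ)
    (hBS : ∀ x, -(deriv (deriv ψ) x) = ω x) :
    deriv ψ 0 = -(1/(2*π)) * (∫ y in (0:ℝ)..(2*π), y * ω y) ∧
    ∀ x : ℝ, ψ x = (∫ y in (0:ℝ)..x, (y - x) * ω y) + x * deriv ψ 0 :=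
  stmt9_general ω ψ hψodd hψper hψ hBS
end

section
/- Let γ > 0. Then every complex root z of the cubic polynomial z³ + 3γz² + (2γ² + 6)z + 4γ has strictly negative real part; moreover this cubic has a real root lying in the open interval (−γ, 0). -/
/-- For every `γ > 0`, each complex root of `z³ + 3γz² + (2γ²+6)z + 4γ` has strictly
negative real part, and the cubic has a real root in `(−γ, 0)`. -/
theorem stmt15 (γ : ℝ) (hγ : 0 < γ) :
    (∀ z : ℂ, z^3 + 3*(γ:ℂ)*z^2 + (2*(γ:ℂ)^2 + 6)*z + 4*(γ:ℂ) = 0 → z.re < 0) ∧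
    (∃ x : ℝ, x^3 + 3*γ*x^2 + (2*γ^2 + 6)*x + 4*γ = 0 ∧ -γ < x ∧ x < 0) := by
  constructor
  · intro z hz
    by_contra hre
    push_neg at hre
    set x := z.re with hx
    set y := z.im with hy
    have hR : x^3 - 3*x*y^2 + 3*γ*(x^2 - y^2) + (2*γ^2 + 6)*x + 4*γ = 0 := by
      have := congrArg Complex.re hz
      simp [pow_succ, Complex.add_re, Complex.add_im, Complex.mul_re, Complex.mul_im,
        Complex.ofReal_re, Complex.ofReal_im] at this
      linarith [this]
    have hI : y * (3*x^2 - y^2 + 6*γ*x + 2*γ^2 + 6) = 0 := by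
      have := congrArg Complex.im hz
      simp [pow_succ, Complex.add_re, Complex.add_im, Complex.mul_re, Complex.mul_im,
        Complex.ofReal_re, Complex.ofReal_im] at this
      nlinarith [this]
    rcases mul_eq_zero.mp hI with hy0 | hq
    · rw [hy0] at hR
      nlinarith [hR, sq_nonneg x, mul_nonneg (mul_nonneg hre hre) hre, mul_nonneg hre hre]
    · have hysq : y^2 = 3*x^2 + 6*γ*x + 2*γ^2 + 6 := by linarith
      rw [hysq] at hR
      nlinarith [sq_nonneg x, mul_nonneg hre hre, mul_nonneg (mul_nonneg hre hre) hre,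
        mul_pos hγ hγ, mul_nonneg hre hγ.le]
  · have hcont : ContinuousOn (fun x : ℝ => x^3 + 3*γ*x^2 + (2*γ^2 + 6)*x + 4*γ)
        (Set.Icc (-γ) 0) := by fun_prop
    have hle : (-γ : ℝ) ≤ 0 := by linarith
    have h1 : (fun x : ℝ => x^3 + 3*γ*x^2 + (2*γ^2 + 6)*x + 4*γ) (-γ) = -2*γ := by ring
    have h2 : (fun x : ℝ => x^3 + 3*γ*x^2 + (2*γ^2 + 6)*x + 4*γ) 0 = 4*γ := by ring
    have h0 : (0 : ℝ) ∈ Set.Ioo ((fun x : ℝ => x^3 + 3*γ*x^2 + (2*γ^2 + 6)*x + 4*γ) (-γ))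
        ((fun x : ℝ => x^3 + 3*γ*x^2 + (2*γ^2 + 6)*x + 4*γ) 0) := by
      rw [h1, h2]; constructor <;> linarith
    obtain ⟨x, hx, hfx⟩ := intermediate_value_Ioo hle hcont h0
    exact ⟨x, hfx, hx.1, hx.2⟩
end

section
/- Let x₀ = −√(12 − √128) and γ₀ = −(4 + 3x₀²)/(4x₀). Then for every γ > 0 one has x₀³ + 3γx₀² + (2γ² + 6)x₀ + 4γ ≤ 0, i.e. 2x₀γ² + (4 + 3x₀²)γ + (x₀³ + 6x₀) ≤ 0, with equality if and only if γ = γ₀. Consequently, for every γ > 0 the cubic x³ + 3γx² + (2γ² + 6)x + 4γ has a real root in the interval [x₀, 0), so its spectral gap (the absolute value of the largest real part of its roots) is at most −x₀, and this bound is attained exactly when γ = γ₀. -/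
/-- `x₀ = −√(12 − √128)`. -/
noncomputable def xzero : ℝ := -Real.sqrt (12 - Real.sqrt 128)

/-- `γ₀ = −(4 + 3x₀²)/(4x₀)`, the optimal damping parameter. -/
noncomputable def gammazero : ℝ := -(4 + 3 * xzero^2) / (4 * xzero)

/-!
Evaluated at a fixed `x`, the cubic `x³ + 3γx² + (2γ² + 6)x + 4γ` is the quadratic
`2x·γ² + (4 + 3x²)·γ + (x³ + 6x)` in `γ`, whose discriminant is `x⁴ − 24x² + 16`.
The number `x₀² = 12 − √128` is a root of `s² − 24s + 16`, so at `x = x₀` the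
discriminant vanishes: the quadratic is `2x₀(γ − γ₀)²`, which is `≤ 0` because `x₀ < 0`
and vanishes only at `γ = γ₀`. Since the cubic is `4γ > 0` at `0`, the intermediate value
theorem gives a root in `[x₀, 0)`.
-/

theorem quadratic_nonpos_of_neg_of_discrim_nonpos {R : Type*} [CommRing R] [LinearOrder R]
    [IsStrictOrderedRing R] {a b c : R} (ha : a < 0) (h : discrim a b c ≤ 0) (x : R) :
    a * (x * x) + b * x + c ≤ 0 := by
  have hcomplete_square : 4 * a * (a * (x * x) + b * x + c) = (2 * a * x + b) ^ 2 - discrim a b c := by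
    rw [discrim]; ring
  nlinarith [sq_nonneg (2 * a * x + b)]

theorem sqrt_128_lt_12 : Real.sqrt 128 < 12 :=
  (Real.sqrt_lt' (by norm_num)).2 (by norm_num)

theorem xzero_neg : xzero < 0 :=
  neg_neg_of_pos (Real.sqrt_pos.2 (sub_pos.2 sqrt_128_lt_12))

theorem xzero_sq : xzero ^ 2 = 12 - Real.sqrt 128 := by
  rw [xzero, neg_sq, Real.sq_sqrt (sub_nonneg.2 sqrt_128_lt_12.le)]

theorem xzero_sq_isRoot : (xzero ^ 2) ^ 2 - 24 * xzero ^ 2 + 16 = 0 := by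
  rw [xzero_sq]
  linear_combination Real.sq_sqrt (by norm_num : (0 : ℝ) ≤ 128)

theorem discrim_xzero : discrim (2 * xzero) (4 + 3 * xzero ^ 2) (xzero ^ 3 + 6 * xzero) = 0 := by
  rw [discrim]
  linear_combination xzero_sq_isRoot

theorem gammazero_eq : gammazero = -(4 + 3 * xzero ^ 2) / (2 * (2 * xzero)) := by
  rw [gammazero]; ring

/-- For every `γ > 0`, the value of the cubic `x³ + 3γx² + (2γ²+6)x + 4γ` at `x₀`
is `≤ 0`, with equality iff `γ = γ₀`; consequently the cubic has a real root in
`[x₀, 0)`, so the spectral gap is at most `−x₀`, attained exactly at `γ = γ₀`. -/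
theorem stmt17 (γ : ℝ) (hγ : 0 < γ) :
    xzero^3 + 3*γ*xzero^2 + (2*γ^2 + 6)*xzero + 4*γ ≤ 0 ∧
    2*xzero*γ^2 + (4 + 3*xzero^2)*γ + (xzero^3 + 6*xzero) ≤ 0 ∧
    (xzero^3 + 3*γ*xzero^2 + (2*γ^2 + 6)*xzero + 4*γ = 0 ↔ γ = gammazero) ∧
    (∃ x : ℝ, xzero ≤ x ∧ x < 0 ∧ x^3 + 3*γ*x^2 + (2*γ^2 + 6)*x + 4*γ = 0) := by
  have ha : 2 * xzero < 0 := by linarith [xzero_neg]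
  have hcubic : xzero^3 + 3*γ*xzero^2 + (2*γ^2 + 6)*xzero + 4*γ
      = 2*xzero*(γ*γ) + (4 + 3*xzero^2)*γ + (xzero^3 + 6*xzero) := by ring
  have hquad : 2*xzero*γ^2 + (4 + 3*xzero^2)*γ + (xzero^3 + 6*xzero) ≤ 0 := by
    rw [sq γ]
    exact quadratic_nonpos_of_neg_of_discrim_nonpos ha discrim_xzero.le γ
  have hcubic_nonpos : xzero^3 + 3*γ*xzero^2 + (2*γ^2 + 6)*xzero + 4*γ ≤ 0 := by
    rwa [hcubic, ← sq]
  refine ⟨hcubic_nonpos, hquad, ?_, ?_⟩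
  · rw [hcubic, quadratic_eq_zero_iff_of_discrim_eq_zero ha.ne discrim_xzero, gammazero_eq]
  · set p : ℝ → ℝ := fun x ↦ x^3 + 3*γ*x^2 + (2*γ^2 + 6)*x + 4*γ
    have hp : ContinuousOn p (Set.Icc xzero 0) := by fun_prop
    have hzero : (0 : ℝ) ∈ Set.Ico (p xzero) (p 0) := ⟨hcubic_nonpos, by simp [p, hγ]⟩
    obtain ⟨x, ⟨hx₀, hx⟩, hpx⟩ := intermediate_value_Ico xzero_neg.le hp hzero
    exact ⟨x, hx₀, hx, hpx⟩
end

section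
/- Let d ≥ 1 and m ≥ 1, let C be a symmetric positive definite m×m real matrix, and let v ∈ ℝ^m be a vector such that D := v vᵀ ⪯ C (i.e. C − vvᵀ is positive semidefinite). Let B be the (dm)×(dm) block matrix whose d diagonal blocks all equal C and whose off-diagonal blocks all equal D. Then, denoting by λ₁(B) ≤ ⋯ ≤ λ_{dm}(B) the eigenvalues of B in increasing order and by λ_min(C), λ_max(C) the extreme eigenvalues of C, one has λ_{dm}(B) ≤ d · λ_max(C) and λ_d(B) ≥ λ_min(C); consequently λ_{dm}(B)/λ_d(B) ≤ d · λ_max(C)/λ_min(C). -/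
/-!
Write `xᵢ` for the blocks of `x` and `σᵢ = v ⬝ᵥ xᵢ`. Splitting `B = I ⊗ (C - vvᵀ) + J ⊗ vvᵀ`,
with `J` the all-ones matrix, gives `xᵀBx = ∑ᵢ xᵢᵀ(C - vvᵀ)xᵢ + (∑ᵢ σᵢ)²`. Cauchy–Schwarz,
`(∑ᵢ σᵢ)² ≤ d ∑ᵢ σᵢ²`, together with `C - vvᵀ ⪰ 0` bounds this by
`d ∑ᵢ xᵢᵀCxᵢ ≤ d λ_max(C) ‖x‖²`. On the subspace where all `σᵢ` agree, which has codimension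
`d - 1`, we have `(∑ᵢ σᵢ)² ≥ ∑ᵢ σᵢ²`, hence `xᵀBx ≥ ∑ᵢ xᵢᵀCxᵢ ≥ λ_min(C) ‖x‖²`. As in
Courant–Fischer, the span of any `d` orthonormal eigenvectors of `B` meets this subspace, so they
cannot all have eigenvalue below `λ_min(C)`.
-/

open Matrix MatrixOrder Module Function

theorem Orthonormal.sum_smul_dotProduct_sum_smul {ι n : Type*} [Fintype ι] [Fintype n]
    {u : ι → EuclideanSpace ℝ n} (hu : Orthonormal ℝ u) (a b : ι → ℝ) :
    (∑ i, a i • ⇑(u i)) ⬝ᵥ (∑ i, b i • ⇑(u i)) = ∑ i, a i * b i := by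
  have h := hu.inner_sum a b Finset.univ
  simp only [EuclideanSpace.inner_eq_star_dotProduct, WithLp.ofLp_sum, WithLp.ofLp_smul,
    star_trivial, conj_trivial] at h
  rw [dotProduct_comm, h]

namespace Matrix.IsHermitian

variable {n : Type*} [Fintype n] [DecidableEq n] {A : Matrix n n ℝ}

theorem le_algebraMap_iff_forall_dotProduct_mulVec_le (hA : A.IsHermitian) (c : ℝ) :
    A ≤ algebraMap ℝ _ c ↔ ∀ x, x ⬝ᵥ A *ᵥ x ≤ c * (x ⬝ᵥ x) := by
  have hH : (algebraMap ℝ (Matrix n n ℝ) c - A).IsHermitian :=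
    (IsSelfAdjoint.algebraMap _ (.all c)).sub hA
  rw [Matrix.le_iff, posSemidef_iff_dotProduct_mulVec, and_iff_right hH]
  simp only [star_trivial, sub_mulVec, dotProduct_sub, Algebra.algebraMap_eq_smul_one,
    smul_mulVec, one_mulVec, dotProduct_smul, smul_eq_mul, sub_nonneg]

theorem algebraMap_le_iff_forall_le_dotProduct_mulVec (hA : A.IsHermitian) (c : ℝ) :
    algebraMap ℝ _ c ≤ A ↔ ∀ x, c * (x ⬝ᵥ x) ≤ x ⬝ᵥ A *ᵥ x := by
  have hH : (A - algebraMap ℝ (Matrix n n ℝ) c).IsHermitian :=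
    hA.sub (IsSelfAdjoint.algebraMap _ (.all c))
  rw [Matrix.le_iff, posSemidef_iff_dotProduct_mulVec, and_iff_right hH]
  simp only [star_trivial, sub_mulVec, dotProduct_sub, Algebra.algebraMap_eq_smul_one,
    smul_mulVec, one_mulVec, dotProduct_smul, smul_eq_mul, sub_nonneg]

theorem forall_eigenvalues_le_iff (hA : A.IsHermitian) (c : ℝ) :
    (∀ i, hA.eigenvalues i ≤ c) ↔ ∀ x, x ⬝ᵥ A *ᵥ x ≤ c * (x ⬝ᵥ x) := by
  rw [← le_algebraMap_iff_forall_dotProduct_mulVec_le hA, le_algebraMap_iff_spectrum_le hA,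
    hA.spectrum_real_eq_range_eigenvalues, Set.forall_mem_range]

theorem forall_le_eigenvalues_iff (hA : A.IsHermitian) (c : ℝ) :
    (∀ i, c ≤ hA.eigenvalues i) ↔ ∀ x, c * (x ⬝ᵥ x) ≤ x ⬝ᵥ A *ᵥ x := by
  rw [← algebraMap_le_iff_forall_le_dotProduct_mulVec hA, algebraMap_le_iff_le_spectrum hA,
    hA.spectrum_real_eq_range_eigenvalues, Set.forall_mem_range]

theorem mulVec_sum_smul_eigenvectorBasis (hA : A.IsHermitian) {ι : Type*} [Fintype ι]
    (k : ι → n) (a : ι → ℝ) :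
    A *ᵥ ∑ i, a i • ⇑(hA.eigenvectorBasis (k i)) =
      ∑ i, (a i * hA.eigenvalues (k i)) • ⇑(hA.eigenvectorBasis (k i)) := by
  simp only [mulVec_sum, mulVec_smul, mulVec_eigenvectorBasis, smul_smul]

theorem exists_le_eigenvalues_of_le_on_ker (hA : A.IsHermitian) {ι M : Type*} [Fintype ι]
    [AddCommGroup M] [Module ℝ M] {k : ι → n} (hk : Injective k)
    (L : (n → ℝ) →ₗ[ℝ] M) (hL : finrank ℝ (LinearMap.range L) < Fintype.card ι) {c : ℝ}
    (hc : ∀ x, L x = 0 → c * (x ⬝ᵥ x) ≤ x ⬝ᵥ A *ᵥ x) :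
    ∃ i, c ≤ hA.eigenvalues (k i) := by
  by_contra! h
  have hu : Orthonormal ℝ fun i => hA.eigenvectorBasis (k i) :=
    hA.eigenvectorBasis.orthonormal.comp k hk
  let φ := Fintype.linearCombination ℝ fun i => ⇑(hA.eigenvectorBasis (k i))
  obtain ⟨a, ha, ha0⟩ := Submodule.exists_mem_ne_zero_of_ne_bot
    (LinearMap.ker_ne_bot_of_finrank_lt (f := L.rangeRestrict ∘ₗ φ) (by simpa using hL))
  have hLa : L (φ a) = 0 := by simpa [Subtype.ext_iff] using ha
  have hle := hc _ hLa
  simp only [φ, Fintype.linearCombination_apply, mulVec_sum_smul_eigenvectorBasis] at hle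
  rw [hu.sum_smul_dotProduct_sum_smul, hu.sum_smul_dotProduct_sum_smul] at hle
  have hlt : ∑ i, a i * (a i * hA.eigenvalues (k i)) < c * ∑ i, a i * a i := by
    obtain ⟨i₀, hi₀⟩ := Function.ne_iff.mp ha0
    rw [Finset.mul_sum]
    refine Finset.sum_lt_sum (fun i _ => ?_) ⟨i₀, Finset.mem_univ _, ?_⟩
    · nlinarith [h i, mul_self_nonneg (a i)]
    · nlinarith [h i₀, mul_self_pos.mpr hi₀]
  linarith

end Matrix.IsHermitian

theorem Matrix.dotProduct_mulVec_vecMulVec_self {κ : Type*} [Fintype κ] (v y : κ → ℝ) :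
    y ⬝ᵥ vecMulVec v v *ᵥ y = (v ⬝ᵥ y) ^ 2 := by
  rw [dotProduct_mulVec, vecMul_vecMulVec, smul_dotProduct, smul_eq_mul, dotProduct_comm y, sq]

theorem dotProduct_self_eq_sum_curry {ι κ : Type*} [Fintype ι] [Fintype κ] (x : ι × κ → ℝ) :
    x ⬝ᵥ x = ∑ i, curry x i ⬝ᵥ curry x i :=
  Fintype.sum_prod_type _

section Blocks

variable {ι κ : Type*} [Fintype ι] [DecidableEq ι] [Fintype κ] {C : Matrix κ κ ℝ}
  {v : κ → ℝ} {B : Matrix (ι × κ) (ι × κ) ℝ}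

theorem dotProduct_mulVec_eq_of_blocks
    (hB : ∀ i j a b, B (i, a) (j, b) = if i = j then C a b else v a * v b) (x : ι × κ → ℝ) :
    x ⬝ᵥ B *ᵥ x =
      ∑ i, curry x i ⬝ᵥ (C - vecMulVec v v) *ᵥ curry x i + (∑ i, v ⬝ᵥ curry x i) ^ 2 := by
  have hBx : ∀ i a, (B *ᵥ x) (i, a) =
      ((C - vecMulVec v v) *ᵥ curry x i) a + v a * ∑ j, v ⬝ᵥ curry x j := by
    intro i a
    have hB' : ∀ j b, B (i, a) (j, b) =
        (if i = j then (C - vecMulVec v v) a b else 0) + v a * v b := by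
      intro j b
      rw [hB]
      split_ifs <;> simp [vecMulVec_apply]
    simp [mulVec, dotProduct, Fintype.sum_prod_type, hB', add_mul, Finset.sum_add_distrib,
      Finset.mul_sum, mul_assoc]
  rw [sq, Finset.sum_mul, ← Finset.sum_add_distrib]
  simp only [dotProduct, Fintype.sum_prod_type, hBx, mul_add, Finset.sum_add_distrib, curry_apply]
  congr 1
  refine Finset.sum_congr rfl fun i _ => ?_
  rw [Finset.sum_mul]
  exact Finset.sum_congr rfl fun a _ => by ring

theorem dotProduct_mulVec_le_of_blocks [Nonempty ι]
    (hB : ∀ i j a b, B (i, a) (j, b) = if i = j then C a b else v a * v b)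
    (hCD : (C - vecMulVec v v).PosSemidef) {c : ℝ}
    (hC : ∀ y, y ⬝ᵥ C *ᵥ y ≤ c * (y ⬝ᵥ y)) (x : ι × κ → ℝ) :
    x ⬝ᵥ B *ᵥ x ≤ (Fintype.card ι * c) * (x ⬝ᵥ x) := by
  set q : ι → ℝ := fun i => curry x i ⬝ᵥ (C - vecMulVec v v) *ᵥ curry x i
  have hq : ∀ i, 0 ≤ q i := fun i => by simpa using hCD.dotProduct_mulVec_nonneg (curry x i)
  have hCq : ∀ i, curry x i ⬝ᵥ C *ᵥ curry x i = q i + (v ⬝ᵥ curry x i) ^ 2 := fun i => by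
    simp only [q, sub_mulVec, dotProduct_sub, dotProduct_mulVec_vecMulVec_self]
    ring
  have hcard : (1 : ℝ) ≤ Fintype.card ι := by exact_mod_cast Fintype.card_pos
  calc x ⬝ᵥ B *ᵥ x = ∑ i, q i + (∑ i, v ⬝ᵥ curry x i) ^ 2 := dotProduct_mulVec_eq_of_blocks hB x
    _ ≤ Fintype.card ι * ∑ i, q i + Fintype.card ι * ∑ i, (v ⬝ᵥ curry x i) ^ 2 := by
      gcongr
      · exact le_mul_of_one_le_left (Finset.sum_nonneg fun i _ => hq i) hcard
      · simpa using sq_sum_le_card_mul_sum_sq (s := Finset.univ) (f := fun i => v ⬝ᵥ curry x i)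
    _ = Fintype.card ι * ∑ i, curry x i ⬝ᵥ C *ᵥ curry x i := by
      simp only [hCq, Finset.sum_add_distrib, mul_add]
    _ ≤ Fintype.card ι * ∑ i, c * (curry x i ⬝ᵥ curry x i) := by
      gcongr with i
      exact hC _
    _ = (Fintype.card ι * c) * (x ⬝ᵥ x) := by
      rw [dotProduct_self_eq_sum_curry, ← Finset.mul_sum, mul_assoc]

theorem le_dotProduct_mulVec_of_blocks
    (hB : ∀ i j a b, B (i, a) (j, b) = if i = j then C a b else v a * v b) {c : ℝ}
    (hC : ∀ y, c * (y ⬝ᵥ y) ≤ y ⬝ᵥ C *ᵥ y) (x : ι × κ → ℝ) {s : ℝ}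
    (hx : ∀ i, v ⬝ᵥ curry x i = s) :
    c * (x ⬝ᵥ x) ≤ x ⬝ᵥ B *ᵥ x := by
  have hcard : (Fintype.card ι : ℝ) ≤ (Fintype.card ι : ℝ) ^ 2 := by
    exact_mod_cast Nat.le_self_pow two_ne_zero _
  calc c * (x ⬝ᵥ x) = ∑ i, c * (curry x i ⬝ᵥ curry x i) := by
        rw [dotProduct_self_eq_sum_curry, Finset.mul_sum]
    _ ≤ ∑ i, curry x i ⬝ᵥ C *ᵥ curry x i := Finset.sum_le_sum fun i _ => hC _
    _ = ∑ i, curry x i ⬝ᵥ (C - vecMulVec v v) *ᵥ curry x i + Fintype.card ι * s ^ 2 := by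
      simp [sub_mulVec, dotProduct_sub, dotProduct_mulVec_vecMulVec_self, hx]
    _ ≤ ∑ i, curry x i ⬝ᵥ (C - vecMulVec v v) *ᵥ curry x i + (Fintype.card ι * s) ^ 2 := by
      rw [mul_pow]
      gcongr
    _ = x ⬝ᵥ B *ᵥ x := by simp [dotProduct_mulVec_eq_of_blocks hB, hx]

theorem exists_le_eigenvalues_of_blocks [DecidableEq κ] [Nonempty ι]
    (hB : ∀ i j a b, B (i, a) (j, b) = if i = j then C a b else v a * v b)
    (hBh : B.IsHermitian) {c : ℝ} (hC : ∀ y, c * (y ⬝ᵥ y) ≤ y ⬝ᵥ C *ᵥ y)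
    {k : ι → ι × κ} (hk : Injective k) :
    ∃ i, c ≤ hBh.eigenvalues (k i) := by
  obtain ⟨i₀⟩ := ‹Nonempty ι›
  let L : (ι × κ → ℝ) →ₗ[ℝ] ι → ℝ :=
    { toFun := fun x i => v ⬝ᵥ curry x i - v ⬝ᵥ curry x i₀
      map_add' := fun x y => by
        ext i
        simp only [dotProduct, curry_apply, Pi.add_apply, mul_add, Finset.sum_add_distrib]
        ring
      map_smul' := fun r x => by
        ext i
        simp only [dotProduct, curry_apply, Pi.smul_apply, smul_eq_mul, RingHom.id_apply,
          Finset.mul_sum, ← Finset.sum_sub_distrib]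
        exact Finset.sum_congr rfl fun a _ => by ring }
  have hL : LinearMap.range L ≠ ⊤ := fun h => by
    obtain ⟨x, hx⟩ := (LinearMap.range_eq_top.mp h) (Pi.single i₀ 1)
    simpa [L] using congrFun hx i₀
  refine hBh.exists_le_eigenvalues_of_le_on_ker hk L ?_ fun x hx => ?_
  · simpa using Submodule.finrank_lt hL
  · exact le_dotProduct_mulVec_of_blocks hB hC x fun i => sub_eq_zero.mp (congrFun hx i)

end Blocks

theorem stmt18_general (d m : ℕ) (hd : 1 ≤ d) (hm : 1 ≤ m)
    (C : Matrix (Fin m) (Fin m) ℝ) (hCpd : C.PosDef)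
    (v : Fin m → ℝ)
    (hDC : (C - Matrix.of fun a b => v a * v b).PosSemidef)
    (B : Matrix (Fin d × Fin m) (Fin d × Fin m) ℝ) (hB : B.IsHermitian)
    (hBdef : ∀ (i j : Fin d) (a b : Fin m),
      B (i, a) (j, b) = if i = j then C a b else v a * v b)
    (eigB : Fin (d * m) → ℝ) (e : Fin (d * m) ≃ Fin d × Fin m)
    (heigB : ∀ i, eigB i = hB.eigenvalues (e i)) (hmono : Monotone eigB)
    (lmin lmax : ℝ)
    (hlmin : IsLeast (Set.range hCpd.isHermitian.eigenvalues) lmin)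
    (hlmax : IsGreatest (Set.range hCpd.isHermitian.eigenvalues) lmax)
    (top dth : Fin (d * m)) (hdth : (dth : ℕ) = d - 1) :
    eigB top ≤ d * lmax ∧ lmin ≤ eigB dth ∧
      eigB top / eigB dth ≤ d * lmax / lmin := by
  have : Nonempty (Fin d) := ⟨⟨0, hd⟩⟩
  obtain ⟨⟨kmin, rfl⟩, hlmin_le⟩ := hlmin
  have hlmin_pos := hCpd.eigenvalues_pos kmin
  have hlmax_nonneg : 0 ≤ lmax := hlmin_pos.le.trans (hlmax.2 ⟨kmin, rfl⟩)
  have hC_le := (hCpd.isHermitian.forall_eigenvalues_le_iff lmax).1 fun k => hlmax.2 ⟨k, rfl⟩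
  have hC_ge := (hCpd.isHermitian.forall_le_eigenvalues_iff _).1 fun k => hlmin_le ⟨k, rfl⟩
  have hupper : eigB top ≤ d * lmax := by
    rw [heigB]
    simpa using (hB.forall_eigenvalues_le_iff _).2
      (dotProduct_mulVec_le_of_blocks hBdef hDC hC_le) (e top)
  have hlower : hCpd.isHermitian.eigenvalues kmin ≤ eigB dth := by
    obtain ⟨i, hi⟩ := exists_le_eigenvalues_of_blocks hBdef hB hC_ge
      (e.injective.comp (Fin.castLE_injective (Nat.le_mul_of_pos_right d hm)))
    exact hi.trans ((heigB _).ge.trans (hmono (Fin.le_def.mpr (by rw [Fin.val_castLE]; omega))))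
  exact ⟨hupper, hlower, div_le_div₀ (by positivity) hupper hlmin_pos hlower⟩

/-- Block-matrix spectral estimate underlying the conditioning of the shallow-KAN
least-squares Hessian.  Let `C` be an `m × m` symmetric positive definite matrix, let
`v ∈ ℝᵐ` with `vvᵀ ⪯ C`, and let `B` be the `(dm) × (dm)` block matrix whose diagonal
blocks equal `C` and whose off-diagonal blocks equal `D = vvᵀ`.  If `eigB` is a
monotone enumeration of the eigenvalues of `B` (listed with multiplicity via an
equivalence `e`), and `lmin`, `lmax` are the extreme eigenvalues of `C`, then the
largest eigenvalue of `B` is at most `d·lmax`, the `d`-th smallest eigenvalue of `B`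
is at least `lmin`, and hence their ratio is at most `d·lmax/lmin`. -/
theorem stmt18 (d m : ℕ) (hd : 1 ≤ d) (hm : 1 ≤ m)
    (C : Matrix (Fin m) (Fin m) ℝ) (hCpd : C.PosDef)
    (v : Fin m → ℝ)
    (hDC : (C - Matrix.of fun a b => v a * v b).PosSemidef)
    (B : Matrix (Fin d × Fin m) (Fin d × Fin m) ℝ) (hB : B.IsHermitian)
    (hBdef : ∀ (i j : Fin d) (a b : Fin m),
      B (i, a) (j, b) = if i = j then C a b else v a * v b)
    (eigB : Fin (d * m) → ℝ) (e : Fin (d * m) ≃ Fin d × Fin m)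
    (heigB : ∀ i, eigB i = hB.eigenvalues (e i)) (hmono : Monotone eigB)
    (lmin lmax : ℝ)
    (hlmin : IsLeast (Set.range hCpd.isHermitian.eigenvalues) lmin)
    (hlmax : IsGreatest (Set.range hCpd.isHermitian.eigenvalues) lmax)
    (top dth : Fin (d * m)) (htop : (top : ℕ) = d * m - 1) (hdth : (dth : ℕ) = d - 1) :
    eigB top ≤ d * lmax ∧ lmin ≤ eigB dth ∧
      eigB top / eigB dth ≤ d * lmax / lmin :=
  stmt18_general d m hd hm C hCpd v hDC B hB hBdef eigB e heigB hmono lmin lmax hlmin hlmax top dth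
    hdth
end
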